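/- arXiv:1607.06149 — 7 statements merged into one kernel-verified Lean document; each statement's English description precedes it below -/
import Mathlib

section
/- Let $f_0,\dots,f_n$ be homogeneous polynomials of degree $e$ in variables $s,t$, and let $a_0,\dots,a_n$ be homogeneous polynomials of degree $b$ in $s,t$. If $\sum_{i=0}^n a_i \partial_s f_i = 0$ and $\sum_{i=0}^n a_i \partial_t f_i = 0$, then $\sum_{i=0}^n f_i \partial_s a_i = 0$ and $\sum_{i=0}^n f_i \partial_t a_i = 0$. -/
open MvPolynomial

lemma euler_aux {K : Type*} [CommRing K] {σ : Type*} [Fintype σ] [DecidableEq σ]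
    {d : ℕ} {p : MvPolynomial σ K} (hp : p.IsHomogeneous d) :
    ∑ i : σ, X i * pderiv i p = (d : K) • p := by
  conv_lhs => rw [p.as_sum]
  simp only [map_sum, Finset.mul_sum]
  rw [Finset.sum_comm]
  conv_rhs => rw [p.as_sum]
  rw [Finset.smul_sum]
  refine Finset.sum_congr rfl fun m hm => ?_
  have hd := hp (mem_support_iff.mp hm)
  calc ∑ i : σ, X i * pderiv i (monomial m (coeff m p))
      = ∑ i : σ, ((m i : K)) • monomial m (coeff m p) := by
        refine Finset.sum_congr rfl fun i _ => ?_
        rw [pderiv_monomial]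
        by_cases h : m i = 0
        · simp [h]
        · rw [X, monomial_mul, smul_monomial]
          congr 1
          · rw [add_comm, tsub_add_cancel_of_le (Finsupp.single_le_iff.mpr (Nat.one_le_iff_ne_zero.mpr h))]
          · rw [smul_eq_mul]; ring
    _ = (d : K) • monomial m (coeff m p) := by
        rw [← Finset.sum_smul, ← Nat.cast_sum]
        congr 2
        rw [← hd, Finsupp.weight_apply, Finsupp.sum_fintype] <;> simp

/-- Lemma 2.1: if `∑ aᵢ ∂ₛfᵢ = ∑ aᵢ ∂ₜfᵢ = 0` for homogeneous `fᵢ` of degree `e`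
and homogeneous `aᵢ` of degree `b`, then `∑ fᵢ ∂ₛaᵢ = ∑ fᵢ ∂ₜaᵢ = 0`. -/
theorem stmt_0 {K : Type*} [Field K] [CharZero K] (n e b : ℕ) (he : 0 < e)
    (f a : Fin (n + 1) → MvPolynomial (Fin 2) K)
    (hf : ∀ i, (f i).IsHomogeneous e) (ha : ∀ i, (a i).IsHomogeneous b)
    (hs : ∑ i, a i * pderiv 0 (f i) = 0)
    (ht : ∑ i, a i * pderiv 1 (f i) = 0) :
    ∑ i, f i * pderiv 0 (a i) = 0 ∧ ∑ i, f i * pderiv 1 (a i) = 0 := by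
  have hP : ∑ i, a i * f i = 0 := by
    have h1 : (e : K) • (∑ i, a i * f i) = 0 := by
      rw [Finset.smul_sum]
      calc ∑ i, (e : K) • (a i * f i)
          = ∑ i, a i * (X 0 * pderiv 0 (f i) + X 1 * pderiv 1 (f i)) := by
            refine Finset.sum_congr rfl fun i _ => ?_
            rw [← Fin.sum_univ_two (fun j => X j * pderiv j (f i)), euler_aux (hf i),
              mul_smul_comm]
        _ = X 0 * ∑ i, a i * pderiv 0 (f i) + X 1 * ∑ i, a i * pderiv 1 (f i) := by
            rw [Finset.mul_sum, Finset.mul_sum, ← Finset.sum_add_distrib]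
            refine Finset.sum_congr rfl fun i _ => by ring
        _ = 0 := by rw [hs, ht]; ring
    have he' : (e : K) ≠ 0 := Nat.cast_ne_zero.mpr he.ne'
    exact (smul_eq_zero.mp h1).resolve_left he'
  have key : ∀ j : Fin 2, (∑ i, a i * pderiv j (f i) = 0) →
      ∑ i, f i * pderiv j (a i) = 0 := by
    intro j hj
    have := congrArg (pderiv j) hP
    rw [map_sum, map_zero] at this
    simp only [pderiv_mul] at this
    rw [Finset.sum_add_distrib, hj] at this
    simpa [mul_comm] using this
  exact ⟨key 0 hs, key 1 ht⟩
end

section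
/- Let $e = k_0 > k_1 > \cdots > k_{n-1} > k_n = 0$ be a strictly decreasing sequence of integers with $k_1 = e-1$ and $k_{n-1} = 1$, and let $f_i = s^{k_i} t^{e-k_i}$. For each $1 \le i \le n-1$, the triple $a_{i-1} = (k_i - k_{i+1})t^{k_{i-1}-k_{i+1}}$, $a_i = -(k_{i-1}-k_{i+1})s^{k_{i-1}-k_i}t^{k_i - k_{i+1}}$, $a_{i+1} = (k_{i-1}-k_i)s^{k_{i-1}-k_{i+1}}$ (all other $a_j = 0$) satisfies $\sum_{j=0}^n a_j \partial_s f_j = 0$ and $\sum_{j=0}^n a_j \partial_t f_j = 0$. -/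
open MvPolynomial

lemma key0 {K : Type*} [CommRing K] (p q r e : ℕ) (hrq : r < q) (hqp : q < p) (hpe : p ≤ e) :
    C ((q - r : ℕ) : K) * X 1 ^ (p - r) * pderiv 0 (X 0 ^ p * X 1 ^ (e - p))
    - C ((p - r : ℕ) : K) * X 0 ^ (p - q) * X 1 ^ (q - r) * pderiv 0 (X 0 ^ q * X 1 ^ (e - q))
    + C ((p - q : ℕ) : K) * X 0 ^ (p - r) * pderiv 0 (X (0 : Fin 2) ^ r * X 1 ^ (e - r)) = 0 := by
  obtain ⟨v, rfl⟩ : ∃ v, q = r + (v + 1) := ⟨q - r - 1, by omega⟩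
  obtain ⟨u, rfl⟩ : ∃ u, p = r + (v + 1) + (u + 1) := ⟨p - (r + (v + 1)) - 1, by omega⟩
  obtain ⟨w, rfl⟩ : ∃ w, e = r + (v + 1) + (u + 1) + w := ⟨e - (r + (v + 1) + (u + 1)), by omega⟩
  have h1 : r + (v + 1) + (u + 1) + w - (r + (v + 1) + (u + 1)) = w := by omega
  have h2 : r + (v + 1) + (u + 1) + w - (r + (v + 1)) = u + 1 + w := by omega
  have h3 : r + (v + 1) + (u + 1) + w - r = v + 1 + (u + 1) + w := by omega
  have h4 : r + (v + 1) + (u + 1) - (r + (v + 1)) = u + 1 := by omega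
  have h5 : r + (v + 1) + (u + 1) - r = v + 1 + (u + 1) := by omega
  have h6 : r + (v + 1) - r = v + 1 := by omega
  rw [h1, h2, h3, h4, h5, h6]
  rcases r with _ | r
  · simp only [pderiv_mul, pderiv_pow, pderiv_X_self, pderiv_X_of_ne (by decide : (1:Fin 2) ≠ 0),
      Nat.add_sub_cancel, Nat.succ_sub_one, mul_zero, mul_one, zero_mul, add_zero, zero_add,
      pow_zero, one_mul, Nat.cast_add, Nat.cast_one, Nat.cast_ofNat, Nat.zero_sub, Nat.cast_zero]
    rw [show v+1+(u+1)-1 = v+(u+1) from by omega]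
    push_cast [map_add, map_one, map_natCast, map_ofNat]
    ring
  · simp only [pderiv_mul, pderiv_pow, pderiv_X_self, pderiv_X_of_ne (by decide : (1:Fin 2) ≠ 0),
      Nat.add_sub_cancel, Nat.succ_sub_one, mul_zero, mul_one, zero_mul, add_zero, zero_add,
      pow_zero, one_mul, Nat.cast_add, Nat.cast_one, Nat.cast_ofNat, Nat.zero_sub, Nat.cast_zero]
    rw [show r+1+(v+1)+(u+1)-1 = r+(v+1)+(u+1) from by omega, show r+1+(v+1)-1 = r+(v+1) from by omega]
    push_cast [map_add, map_one, map_natCast, map_ofNat]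
    ring

lemma key1 {K : Type*} [CommRing K] (p q r e : ℕ) (hrq : r < q) (hqp : q < p) (hpe : p ≤ e) :
    C ((q - r : ℕ) : K) * X 1 ^ (p - r) * pderiv 1 (X 0 ^ p * X 1 ^ (e - p))
    - C ((p - r : ℕ) : K) * X 0 ^ (p - q) * X 1 ^ (q - r) * pderiv 1 (X 0 ^ q * X 1 ^ (e - q))
    + C ((p - q : ℕ) : K) * X 0 ^ (p - r) * pderiv 1 (X (0 : Fin 2) ^ r * X 1 ^ (e - r)) = 0 := by
  obtain ⟨v, rfl⟩ : ∃ v, q = r + (v + 1) := ⟨q - r - 1, by omega⟩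
  obtain ⟨u, rfl⟩ : ∃ u, p = r + (v + 1) + (u + 1) := ⟨p - (r + (v + 1)) - 1, by omega⟩
  obtain ⟨w, rfl⟩ : ∃ w, e = r + (v + 1) + (u + 1) + w := ⟨e - (r + (v + 1) + (u + 1)), by omega⟩
  have h1 : r + (v + 1) + (u + 1) + w - (r + (v + 1) + (u + 1)) = w := by omega
  have h2 : r + (v + 1) + (u + 1) + w - (r + (v + 1)) = u + 1 + w := by omega
  have h3 : r + (v + 1) + (u + 1) + w - r = v + 1 + (u + 1) + w := by omega
  have h4 : r + (v + 1) + (u + 1) - (r + (v + 1)) = u + 1 := by omega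
  have h5 : r + (v + 1) + (u + 1) - r = v + 1 + (u + 1) := by omega
  have h6 : r + (v + 1) - r = v + 1 := by omega
  rw [h1, h2, h3, h4, h5, h6]
  rcases w with _ | w
  · simp only [pderiv_mul, pderiv_pow, pderiv_X_self, pderiv_X_of_ne (by decide : (0:Fin 2) ≠ 1),
      Nat.add_sub_cancel, Nat.succ_sub_one, mul_zero, mul_one, zero_mul, add_zero, zero_add,
      pow_zero, one_mul, Nat.cast_add, Nat.cast_one, Nat.cast_ofNat, Nat.zero_sub, Nat.cast_zero]
    rw [show v+1+(u+1)-1 = v+(u+1) from by omega]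
    push_cast [map_add, map_one, map_natCast, map_ofNat]
    ring
  · simp only [pderiv_mul, pderiv_pow, pderiv_X_self, pderiv_X_of_ne (by decide : (0:Fin 2) ≠ 1),
      Nat.add_sub_cancel, Nat.succ_sub_one, mul_zero, mul_one, zero_mul, add_zero, zero_add,
      pow_zero, one_mul, Nat.cast_add, Nat.cast_one, Nat.cast_ofNat, Nat.zero_sub, Nat.cast_zero]
    rw [show u+1+(w+1)-1 = u+(w+1) from by omega,
        show v+1+(u+1)+(w+1)-1 = v+(u+1)+(w+1) from by omega]
    push_cast [map_add, map_one, map_natCast, map_ofNat]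
    ring


/-- The syzygy `Rᵢ` among the columns of the Jacobian of the monomial map
`f = (s^{k₀}, s^{k₁}t^{e-k₁}, …, tᵉ)` (proof of Theorem 3.2). -/
theorem stmt_6 {K : Type*} [Field K] [CharZero K] (n e : ℕ) (hn : 2 ≤ n)
    (κ : ℕ → ℕ) (h0 : κ 0 = e) (h1 : κ 1 = e - 1) (hn1 : κ (n - 1) = 1)
    (hnn : κ n = 0) (hdec : ∀ i < n, κ (i + 1) < κ i)
    (f : ℕ → MvPolynomial (Fin 2) K)
    (hf : ∀ j, f j = X 0 ^ κ j * X 1 ^ (e - κ j))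
    (i : ℕ) (hi1 : 1 ≤ i) (hi2 : i ≤ n - 1)
    (a : ℕ → MvPolynomial (Fin 2) K)
    (ha : a = fun j =>
      if j = i - 1 then C ((κ i - κ (i + 1) : ℕ) : K) * X 1 ^ (κ (i - 1) - κ (i + 1))
      else if j = i then
        -(C ((κ (i - 1) - κ (i + 1) : ℕ) : K) * X 0 ^ (κ (i - 1) - κ i) *
            X 1 ^ (κ i - κ (i + 1)))
      else if j = i + 1 then C ((κ (i - 1) - κ i : ℕ) : K) * X 0 ^ (κ (i - 1) - κ (i + 1))
      else 0) :
    ∑ j ∈ Finset.range (n + 1), a j * pderiv 0 (f j) = 0 ∧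
      ∑ j ∈ Finset.range (n + 1), a j * pderiv 1 (f j) = 0 := by
  have mono : ∀ j ≤ n, κ j ≤ e := by
    intro j hj
    induction j with
    | zero => omega
    | succ k ih =>
      have hk := hdec k (by omega)
      have := ih (by omega)
      omega
  have hq : κ (i + 1) < κ i := hdec i (by omega)
  have hp : κ i < κ (i - 1) := by
    have := hdec (i - 1) (by omega)
    rwa [Nat.sub_add_cancel hi1] at this
  have hpe : κ (i - 1) ≤ e := mono (i - 1) (by omega)
  have hsub : ({i - 1, i, i + 1} : Finset ℕ) ⊆ Finset.range (n + 1) := by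
    intro j hj
    simp only [Finset.mem_insert, Finset.mem_singleton] at hj
    simp only [Finset.mem_range]
    omega
  have ha1 : a (i - 1) = C ((κ i - κ (i + 1) : ℕ) : K) * X 1 ^ (κ (i - 1) - κ (i + 1)) := by
    rw [ha]; simp
  have ha2 : a i = -(C ((κ (i - 1) - κ (i + 1) : ℕ) : K) * X 0 ^ (κ (i - 1) - κ i) *
      X 1 ^ (κ i - κ (i + 1))) := by
    rw [ha]
    simp only [if_neg (by omega : ¬ i = i - 1), if_pos rfl]
    simp
  have ha3 : a (i + 1) = C ((κ (i - 1) - κ i : ℕ) : K) * X 0 ^ (κ (i - 1) - κ (i + 1)) := by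
    rw [ha]
    simp only [if_neg (by omega : ¬ i + 1 = i - 1), if_neg (by omega : ¬ i + 1 = i), if_pos rfl]
    simp
  have hred : ∀ g : ℕ → MvPolynomial (Fin 2) K,
      ∑ j ∈ Finset.range (n + 1), a j * g j
        = a (i - 1) * g (i - 1) + a i * g i + a (i + 1) * g (i + 1) := by
    intro g
    rw [← Finset.sum_subset hsub (by
      intro j _ hj
      simp only [Finset.mem_insert, Finset.mem_singleton, not_or] at hj
      rw [ha]
      simp only [if_neg hj.1, if_neg hj.2.1, if_neg hj.2.2, zero_mul])]
    rw [Finset.sum_insert (by simp only [Finset.mem_insert, Finset.mem_singleton]; omega),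
      Finset.sum_insert (by simp only [Finset.mem_singleton]; omega),
      Finset.sum_singleton, add_assoc]
  constructor
  · rw [hred, ha1, ha2, ha3, hf (i - 1), hf i, hf (i + 1)]
    have := key0 (K := K) (κ (i - 1)) (κ i) (κ (i + 1)) e hq hp hpe
    linear_combination this
  · rw [hred, ha1, ha2, ha3, hf (i - 1), hf i, hf (i + 1)]
    have := key1 (K := K) (κ (i - 1)) (κ i) (κ (i + 1)) e hq hp hpe
    linear_combination this
end

section
/- Suppose the columns of the Jacobian matrix $\partial f$ of a morphism $f = (f_0 : \cdots : f_n): \mathbb{P}^1 \to \mathbb{P}^n$ of degree $e$ satisfy a degree-two relation $a = (s^2, t^2, 0, \dots, 0)$, i.e., $s^2 \partial_j f_0 + t^2 \partial_j f_1 = 0$ for $j \in \{s,t\}$. Then $f_0 = 0$; in particular $f$ is degenerate. -/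
/-!
Multiplying the `j`-th Jacobian relation by `X j` and summing over `j`, Euler's identity turns a
relation `a` among the columns of the Jacobian of forms of positive degree into the relation
`∑ aᵢ fᵢ = 0` among the forms themselves; differentiating that and subtracting the Jacobian relation
leaves `∑ ∂ⱼaᵢ fᵢ = 0`. For `a = (s², t²)` and `j = s` this reads `2 s f₀ = 0`.
-/

open MvPolynomial

namespace MvPolynomial

variable {R σ ι : Type*} [CommRing R] {s : Finset ι} {a f : ι → MvPolynomial σ R} {e : ℕ}

theorem nsmul_sum_mul_eq_zero_of_sum_mul_pderiv_eq_zero [Fintype σ]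
    (hf : ∀ i ∈ s, (f i).IsHomogeneous e) (h : ∀ j, ∑ i ∈ s, a i * pderiv j (f i) = 0) :
    e • ∑ i ∈ s, a i * f i = 0 :=
  calc e • ∑ i ∈ s, a i * f i
      = ∑ i ∈ s, a i * ∑ j, X j * pderiv j (f i) := by
        rw [Finset.smul_sum]
        refine Finset.sum_congr rfl fun i hi ↦ ?_
        rw [(hf i hi).sum_X_mul_pderiv, mul_smul_comm]
    _ = ∑ j, X j * ∑ i ∈ s, a i * pderiv j (f i) := by
        simp only [Finset.mul_sum]
        rw [Finset.sum_comm]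
        exact Finset.sum_congr rfl fun _ _ ↦ Finset.sum_congr rfl fun _ _ ↦ by ring
    _ = 0 := by simp [h]

theorem sum_pderiv_mul_eq_zero_of_sum_mul_pderiv_eq_zero [Fintype σ] [IsDomain R] [CharZero R]
    (he : 1 ≤ e) (hf : ∀ i ∈ s, (f i).IsHomogeneous e)
    (h : ∀ j, ∑ i ∈ s, a i * pderiv j (f i) = 0) (j : σ) :
    ∑ i ∈ s, pderiv j (a i) * f i = 0 := by
  have hrel : ∑ i ∈ s, a i * f i = 0 :=
    (smul_eq_zero.mp (nsmul_sum_mul_eq_zero_of_sum_mul_pderiv_eq_zero hf h)).resolve_left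
      (by omega)
  have hderiv := congrArg (pderiv j) hrel
  simp only [map_sum, Derivation.leibniz, smul_eq_mul, Finset.sum_add_distrib, h j,
    map_zero] at hderiv
  simpa [mul_comm] using hderiv

end MvPolynomial

/-- Lemma 4.4 (lem-line): if the Jacobian of `f` satisfies the degree-two relation
`(s², t², 0, …, 0)`, then `f₀ = 0`; in particular `f` is degenerate. -/
theorem stmt_10 {K : Type*} [Field K] [CharZero K] (n e : ℕ) (he : 1 ≤ e)
    (f : Fin (n + 1) → MvPolynomial (Fin 2) K)
    (hf : ∀ i, (f i).IsHomogeneous e)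
    (hs : X 0 ^ 2 * pderiv 0 (f 0) + X 1 ^ 2 * pderiv 0 (f 1) = 0)
    (ht : X 0 ^ 2 * pderiv 1 (f 0) + X 1 ^ 2 * pderiv 1 (f 1) = 0) :
    f 0 = 0 := by
  have hjac : ∀ j, ∑ i : Fin 2, ![X 0 ^ 2, X 1 ^ 2] i * pderiv j (![f 0, f 1] i) = 0 := by
    intro j
    fin_cases j <;> simpa
  have h := sum_pderiv_mul_eq_zero_of_sum_mul_pderiv_eq_zero he
    (fun i _ ↦ by fin_cases i <;> simp [hf]) hjac 0
  simpa [pderiv_X] using h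
end

section
/- Let $f = (f_0,\dots,f_n)$ be homogeneous polynomials of degree $e$ with no common factor defining a nondegenerate map $\mathbb{P}^1 \to \mathbb{P}^n$, and suppose $(a_0,\dots,a_n)$ is a tuple of homogeneous degree-2 polynomials, not all zero, with a common linear factor, satisfying $\sum a_i \partial_s f_i = \sum a_i \partial_t f_i = 0$. Then $f$ is degenerate: there exist constants $c_0,\dots,c_n$, not all zero, with $\sum c_i f_i = 0$. -/
/-!
Dividing the two relations by the common linear factor `ℓ` leaves relations `∑ bᵢ ∂ⱼ fᵢ = 0` with
linear forms `bᵢ`. Euler's identity `∑ⱼ Xⱼ ∂ⱼ fᵢ = e fᵢ` turns them into `∑ bᵢ fᵢ = 0`, and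
differentiating this gives `∑ (∂ⱼ bᵢ) fᵢ = 0`, a relation with constant coefficients. It is
nontrivial for some `j` because, again by Euler, `bᵢ = ∑ⱼ Xⱼ ∂ⱼ bᵢ`.
-/

namespace MvPolynomial

variable {σ R : Type*}

section Homogeneous

attribute [local instance] MvPolynomial.gradedAlgebra

theorem homogeneousComponent_add_mul_of_isHomogeneous [CommSemiring R] {φ : MvPolynomial σ R}
    {m : ℕ} (hφ : φ.IsHomogeneous m) (k : ℕ) (ψ : MvPolynomial σ R) :
    homogeneousComponent (m + k) (φ * ψ) = φ * homogeneousComponent k ψ := by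
  have := DirectSum.coe_decompose_mul_of_left_mem_of_le (homogeneousSubmodule σ R) (b := ψ)
    ((mem_homogeneousSubmodule m φ).mpr hφ) (Nat.le_add_right m k)
  have hdecomp (p : MvPolynomial σ R) (j : ℕ) :
      (DirectSum.decompose (homogeneousSubmodule σ R) p j : MvPolynomial σ R) =
        homogeneousComponent j p :=
    decomposition.decompose'_apply p j
  rwa [hdecomp, hdecomp, Nat.add_sub_cancel_left] at this

theorem IsHomogeneous.of_mul_left [CommRing R] [NoZeroDivisors R] {φ ψ : MvPolynomial σ R}
    {m n : ℕ} (hφ : φ.IsHomogeneous m) (hφ0 : φ ≠ 0) (h : (φ * ψ).IsHomogeneous (m + n)) :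
    ψ.IsHomogeneous n := by
  suffices homogeneousComponent n ψ = ψ from this ▸ homogeneousComponent_isHomogeneous n ψ
  ext d
  rw [coeff_homogeneousComponent]
  split_ifs with hdn
  · rfl
  have hcomp : homogeneousComponent d.degree ψ = 0 := by
    refine (mul_eq_zero.mp ?_).resolve_left hφ0
    rw [← homogeneousComponent_add_mul_of_isHomogeneous hφ,
      homogeneousComponent_of_mem ((mem_homogeneousSubmodule _ _).mpr h), if_neg (by omega)]
  simpa [coeff_homogeneousComponent] using (congrArg (coeff d) hcomp).symm

theorem IsHomogeneous.pderiv_eq_C [CommSemiring R] {p : MvPolynomial σ R}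
    (hp : p.IsHomogeneous 1) (i : σ) : pderiv i p = C (coeff 0 (pderiv i p)) :=
  totalDegree_eq_zero_iff_eq_C.mp <| (totalDegree_zero_iff_isHomogeneous σ).mpr hp.pderiv

end Homogeneous

section JacobianRelation

variable [Fintype σ] {ι : Type*} [Fintype ι]

theorem sum_mul_eq_zero_of_sum_mul_pderiv_eq_zero [CommRing R] [IsDomain R] [CharZero R]
    {e : ℕ} (he : e ≠ 0) {f b : ι → MvPolynomial σ R} (hf : ∀ i, (f i).IsHomogeneous e)
    (h : ∀ j, ∑ i, b i * pderiv j (f i) = 0) : ∑ i, b i * f i = 0 := by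
  have heuler : (e : MvPolynomial σ R) * ∑ i, b i * f i =
      ∑ j, X j * ∑ i, b i * pderiv j (f i) := by
    simp_rw [Finset.mul_sum]
    rw [Finset.sum_comm]
    refine Finset.sum_congr rfl fun i _ => ?_
    rw [← nsmul_eq_mul, ← mul_smul_comm, ← (hf i).sum_X_mul_pderiv, Finset.mul_sum]
    exact Finset.sum_congr rfl fun j _ => by ring
  simp only [h, mul_zero, Finset.sum_const_zero] at heuler
  exact (mul_eq_zero.mp heuler).resolve_left (Nat.cast_ne_zero.mpr he)

theorem exists_sum_C_mul_eq_zero_of_sum_mul_pderiv_eq_zero {K : Type*} [Field K] [CharZero K]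
    {e : ℕ} (he : e ≠ 0) {f b : ι → MvPolynomial σ K} (hf : ∀ i, (f i).IsHomogeneous e)
    (hb : ∀ i, (b i).IsHomogeneous 1) (hb0 : b ≠ 0)
    (h : ∀ j, ∑ i, b i * pderiv j (f i) = 0) :
    ∃ c : ι → K, c ≠ 0 ∧ ∑ i, C (c i) * f i = 0 := by
  have hbf := sum_mul_eq_zero_of_sum_mul_pderiv_eq_zero he hf h
  have hderiv (j : σ) : ∑ i, pderiv j (b i) * f i = 0 := by
    simpa only [map_sum, pderiv_mul, Finset.sum_add_distrib, h j, add_zero, map_zero]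
      using congrArg (pderiv j) hbf
  obtain ⟨j, hj⟩ : ∃ j, (fun i => pderiv j (b i)) ≠ 0 := by
    by_contra! hall
    apply hb0
    ext1 i
    rw [Pi.zero_apply, ← one_smul ℕ (b i), ← (hb i).sum_X_mul_pderiv]
    simp [fun j => congrFun (hall j) i]
  refine ⟨fun i => coeff 0 (pderiv j (b i)), fun hc => hj ?_, ?_⟩
  · ext1 i
    rw [(hb i).pderiv_eq_C j, congrFun hc i, Pi.zero_apply, map_zero, Pi.zero_apply]
  · rw [← hderiv j]
    exact Finset.sum_congr rfl fun i _ => by rw [← (hb i).pderiv_eq_C j]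

end JacobianRelation

end MvPolynomial

open MvPolynomial

theorem stmt_11_general {K : Type*} [Field K] [CharZero K] (n e : ℕ) (he : 1 ≤ e)
    (f : Fin (n + 1) → MvPolynomial (Fin 2) K)
    (hf : ∀ i, (f i).IsHomogeneous e)
    (a : Fin (n + 1) → MvPolynomial (Fin 2) K)
    (ha2 : ∀ i, (a i).IsHomogeneous 2) (hane : a ≠ 0)
    (hl : ∃ ℓ : MvPolynomial (Fin 2) K, ℓ.IsHomogeneous 1 ∧ ∀ i, ℓ ∣ a i)
    (hs : ∑ i, a i * pderiv 0 (f i) = 0)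
    (ht : ∑ i, a i * pderiv 1 (f i) = 0) :
    ∃ c : Fin (n + 1) → K, c ≠ 0 ∧ ∑ i, C (c i) * f i = 0 := by
  obtain ⟨ℓ, hℓ, hdvd⟩ := hl
  choose b hb using hdvd
  have hab : a = ℓ • b := funext hb
  have hℓ0 : ℓ ≠ 0 := by rintro rfl; simp [hab] at hane
  have hb0 : b ≠ 0 := by rintro rfl; simp [hab] at hane
  have hb1 (i : Fin (n + 1)) : (b i).IsHomogeneous 1 :=
    hℓ.of_mul_left hℓ0 (hb i ▸ ha2 i)
  have hrel (j : Fin 2) : ∑ i, b i * pderiv j (f i) = 0 := by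
    refine (mul_eq_zero.mp ?_).resolve_left hℓ0
    rw [Finset.mul_sum]
    simp_rw [← mul_assoc, ← hb]
    fin_cases j
    exacts [hs, ht]
  exact exists_sum_C_mul_eq_zero_of_sum_mul_pderiv_eq_zero (by omega) hf hb1 hb0 hrel

/-- Lemma 4.5 (lem-reducible): if the Jacobian of a nondegenerate `f` (coordinates
homogeneous of degree `e` with no common factor) satisfies a nonzero degree-two
relation whose entries have a common linear factor, then `f` is degenerate. -/
theorem stmt_11 {K : Type*} [Field K] [CharZero K] (n e : ℕ) (he : 1 ≤ e)
    (f : Fin (n + 1) → MvPolynomial (Fin 2) K)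
    (hf : ∀ i, (f i).IsHomogeneous e)
    (hcf : ∀ p : MvPolynomial (Fin 2) K, (∀ i, p ∣ f i) → IsUnit p)
    (hnd : ¬ ∃ c : Fin (n + 1) → K, c ≠ 0 ∧ ∑ i, C (c i) * f i = 0)
    (a : Fin (n + 1) → MvPolynomial (Fin 2) K)
    (ha2 : ∀ i, (a i).IsHomogeneous 2) (hane : a ≠ 0)
    (hl : ∃ ℓ : MvPolynomial (Fin 2) K, ℓ.IsHomogeneous 1 ∧ ∀ i, ℓ ∣ a i)
    (hs : ∑ i, a i * pderiv 0 (f i) = 0)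
    (ht : ∑ i, a i * pderiv 1 (f i) = 0) :
    ∃ c : Fin (n + 1) → K, c ≠ 0 ∧ ∑ i, C (c i) * f i = 0 :=
  stmt_11_general n e he f hf a ha2 hane hl hs ht
end

section
/- Let $d \ge 2$ and consider the $4\times 4$ matrix $A$ over $k[s,t]$ given by rows $(d(d-1)t^{d-1}, -d(d-1)st^{d-2}, 0, 0)$, $(0, -dt^{d-1}, ds^{d-1}, 0)$, $(0, dt^{d-1}, -ds^{d-1}, 0)$, $(0, 0, -d(d-1)s^{d-2}t, d(d-1)s^{d-1})$. If $(f_0,f_1,f_2,f_3)$ are homogeneous polynomials of degree $e$ with $A\,(f_0,f_1,f_2,f_3)^T = 0$, then $s^{d+1}$ divides $f_0$, and $f_0$ determines $f_1, f_2, f_3$ uniquely; the solution space has dimension $e - d$ over $k$ (i.e., $f_0$ ranges over $s^{d+1}$ times an arbitrary homogeneous polynomial of degree $e-d-1$). -/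
open MvPolynomial

/-- The `4×4` matrix of conditions from the proof of Theorem 5.1 for a pair of
degree-`d` relations satisfying the parameterized tangency condition. -/
noncomputable def tangencyMatrix (K : Type*) [Field K] (d : ℕ) :
    Matrix (Fin 4) (Fin 4) (MvPolynomial (Fin 2) K) :=
  !![C ((d : K) * ((d : K) - 1)) * X 1 ^ (d - 1),
      -(C ((d : K) * ((d : K) - 1)) * X 0 * X 1 ^ (d - 2)), 0, 0;
    0, -(C (d : K) * X 1 ^ (d - 1)), C (d : K) * X 0 ^ (d - 1), 0;
    0, C (d : K) * X 1 ^ (d - 1), -(C (d : K) * X 0 ^ (d - 1)), 0;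
    0, 0, -(C ((d : K) * ((d : K) - 1)) * X 0 ^ (d - 2) * X 1),
      C ((d : K) * ((d : K) - 1)) * X 0 ^ (d - 1)]

/-- The space of 4-tuples of degree-`e` homogeneous polynomials killed by the
matrix `A = tangencyMatrix K d`. -/
noncomputable def tangencySolSpace (K : Type*) [Field K] (d e : ℕ) :
    Submodule K (Fin 4 → MvPolynomial (Fin 2) K) :=
  (⨅ i : Fin 4,
      Submodule.comap (LinearMap.proj i) (homogeneousSubmodule (Fin 2) K e)) ⊓
    ⨅ i : Fin 4, LinearMap.ker
      (∑ j : Fin 4, (LinearMap.mulLeft K (tangencyMatrix K d i j)).comp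
        (LinearMap.proj j))


/-!
The rows of `A` amount to `t f₀ = s f₁`, `t^{d-1} f₁ = s^{d-1} f₂` and `t f₂ = s f₃`: the two
middle rows agree up to sign, and the constants `d` and `d(d-1)` are units in characteristic zero.
Chaining them gives `t^{d+1} f₀ = s^{d+1} f₃`, so `s^{d+1} ∣ f₀` because `s` is prime and does
not divide `t`. Writing `f₀ = s^{d+1} c`, the relations force
`f = c • (s^{d+1}, s^d t, s t^d, t^{d+1})`, so the solutions of degree `e` correspond to the
binary forms `c` of degree `e - d - 1`, a space of dimension `e - d`.
-/

section Homogeneous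

variable {σ R : Type*} [CommSemiring R]

theorem MvPolynomial.IsHomogeneous.of_mul_X_pow {ψ : MvPolynomial σ R} {i : σ} {k m : ℕ}
    (h : (ψ * X i ^ k).IsHomogeneous (m + k)) : ψ.IsHomogeneous m := by
  intro u hu
  have hprod : coeff (u + Finsupp.single i k) (ψ * X i ^ k) ≠ 0 := by
    rwa [X_pow_eq_monomial, coeff_mul_monomial, mul_one]
  have := h hprod
  simp only [map_add, Finsupp.weight_single, Pi.one_apply, smul_eq_mul, mul_one] at this
  omega

theorem MvPolynomial.finrank_homogeneousSubmodule {K : Type*} [Field K] [Fintype σ]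
    (n : ℕ) :
    Module.finrank K (homogeneousSubmodule σ K n) = (Fintype.card σ + n - 1).choose n := by
  classical
  have hS : {u : σ →₀ ℕ | u.degree = n} =
      ((Finset.univ : Finset σ).finsuppAntidiag n : Set (σ →₀ ℕ)) := by
    ext u
    simp [Finsupp.degree_eq_sum]
  rw [homogeneousSubmodule_eq_finsupp_supported, hS,
    (AddMonoidAlgebra.supportedEquivFinsupp _).finrank_eq, Module.finrank_finsupp_self]
  simp [Finset.card_finsuppAntidiag_nat_eq_choose]

theorem MvPolynomial.finrank_homogeneousSubmodule_fin_two {K : Type*} [Field K] (n : ℕ) :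
    Module.finrank K (homogeneousSubmodule (Fin 2) K n) = n + 1 := by
  rw [finrank_homogeneousSubmodule, Fintype.card_fin, show 2 + n - 1 = n + 1 by omega,
    Nat.choose_succ_self_right]

end Homogeneous

section Relations

variable {R : Type*}

def TangencyRelations [Monoid R] (s t : R) (k : ℕ) (f : Fin 4 → R) : Prop :=
  t * f 0 = s * f 1 ∧ t ^ k * f 1 = s ^ k * f 2 ∧ t * f 2 = s * f 3

/-- With `k = d - 1` this is `(s^{d+1}, s^d t, s t^d, t^{d+1})`. -/
def tangencyKernelVector [Monoid R] (s t : R) (k : ℕ) : Fin 4 → R :=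
  ![s ^ (k + 2), s ^ (k + 1) * t, s * t ^ (k + 1), t ^ (k + 2)]

theorem tangencyRelations_iff_exists_eq_smul [CommRing R] [IsDomain R] {s t : R} (hs : Prime s)
    (hst : ¬ s ∣ t) {k : ℕ} {f : Fin 4 → R} :
    TangencyRelations s t k f ↔ ∃ c : R, f = c • tangencyKernelVector s t k := by
  constructor
  · rintro ⟨h01, h12, h23⟩
    have hcross : t ^ (k + 2) * f 0 = s ^ (k + 2) * f 3 := by
      linear_combination t ^ (k + 1) * h01 + s * t * h12 + s ^ (k + 1) * h23
    obtain ⟨c, hc0⟩ : s ^ (k + 2) ∣ f 0 :=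
      hs.pow_dvd_of_dvd_mul_left _ (fun h ↦ hst (hs.dvd_of_dvd_pow h)) ⟨f 3, hcross⟩
    have hc1 : f 1 = s ^ (k + 1) * t * c :=
      mul_left_cancel₀ hs.ne_zero (by linear_combination t * hc0 - h01)
    have hc2 : f 2 = s * t ^ (k + 1) * c :=
      mul_left_cancel₀ (pow_ne_zero k hs.ne_zero) (by linear_combination t ^ k * hc1 - h12)
    have hc3 : f 3 = t ^ (k + 2) * c :=
      mul_left_cancel₀ hs.ne_zero (by linear_combination t * hc2 - h23)
    refine ⟨c, funext fun i ↦ ?_⟩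
    fin_cases i <;> simp [tangencyKernelVector, hc0, hc1, hc2, hc3, mul_comm]
  · rintro ⟨c, rfl⟩
    simp only [TangencyRelations, tangencyKernelVector, Pi.smul_apply, smul_eq_mul,
      Matrix.cons_val]
    exact ⟨by ring, by ring, by ring⟩

theorem smul_tangencyKernelVector_injective [CommRing R] [IsDomain R] {s : R} (hs : s ≠ 0)
    (t : R) (k : ℕ) : Function.Injective ((· • tangencyKernelVector s t k) : R → Fin 4 → R) :=
  fun _ _ h ↦ mul_right_cancel₀ (pow_ne_zero _ hs) (congrFun h 0)

theorem tangencyKernelVector_isHomogeneous {σ K : Type*} [CommSemiring K]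
    {s t : MvPolynomial σ K} (hs : s.IsHomogeneous 1) (ht : t.IsHomogeneous 1) (k : ℕ)
    (i : Fin 4) : (tangencyKernelVector s t k i).IsHomogeneous (k + 2) := by
  have hpow {p : MvPolynomial σ K} (hp : p.IsHomogeneous 1) (n : ℕ) :
      (p ^ n).IsHomogeneous n := by
    simpa using hp.pow n
  fin_cases i <;> simp only [tangencyKernelVector, Fin.zero_eta, Fin.mk_one, Fin.reduceFinMk,
    Matrix.cons_val]
  · exact hpow hs _
  · exact (hpow hs _).mul ht
  · convert hs.mul (hpow ht (k + 1)) using 1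
    omega
  · exact hpow ht _

end Relations

section Tangency

variable {K : Type*} [Field K]

theorem tangencyMatrix_mulVec_eq_zero_iff [CharZero K] (n : ℕ)
    (f : Fin 4 → MvPolynomial (Fin 2) K) :
    (tangencyMatrix K (n + 2)).mulVec f = 0 ↔ TangencyRelations (X 0) (X 1) (n + 1) f := by
  -- naming the constants `d` and `d(d-1)` keeps `simp` from splitting their casts below
  obtain ⟨a, ha, hma⟩ : ∃ a : MvPolynomial (Fin 2) K, a ≠ 0 ∧ C ((n + 2 : ℕ) : K) = a :=
    ⟨_, by simp only [ne_eq, C_eq_zero, Nat.cast_eq_zero]; omega, rfl⟩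
  obtain ⟨b, hb, hmb⟩ : ∃ b : MvPolynomial (Fin 2) K, b ≠ 0 ∧
      C (((n + 2 : ℕ) : K) * (((n + 2 : ℕ) : K) - 1)) = b := by
    refine ⟨_, ?_, rfl⟩
    have : ((n + 2 : ℕ) : K) - 1 = ((n + 1 : ℕ) : K) := by push_cast; ring
    simp only [ne_eq, C_eq_zero, this, mul_eq_zero, Nat.cast_eq_zero]
    omega
  have hrows : (tangencyMatrix K (n + 2)).mulVec f =
      ![b * X 1 ^ n * (X 1 * f 0 - X 0 * f 1),
        -(a * (X 1 ^ (n + 1) * f 1 - X 0 ^ (n + 1) * f 2)),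
        a * (X 1 ^ (n + 1) * f 1 - X 0 ^ (n + 1) * f 2),
        -(b * X 0 ^ n * (X 1 * f 2 - X 0 * f 3))] := by
    rw [tangencyMatrix, hma, hmb]
    funext i
    fin_cases i <;> simp [Matrix.mulVec, dotProduct, Fin.sum_univ_four] <;> ring
  rw [hrows]
  simp [_root_.funext_iff, Fin.forall_fin_succ, TangencyRelations, ha, hb, sub_eq_zero]

theorem mem_tangencySolSpace {d e : ℕ} {f : Fin 4 → MvPolynomial (Fin 2) K} :
    f ∈ tangencySolSpace K d e ↔
      (∀ i, (f i).IsHomogeneous e) ∧ (tangencyMatrix K d).mulVec f = 0 := by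
  simp only [tangencySolSpace, Submodule.mem_inf, Submodule.mem_iInf, Submodule.mem_comap,
    LinearMap.mem_ker, LinearMap.sum_apply, LinearMap.coe_comp, Function.comp_apply,
    LinearMap.proj_apply, LinearMap.mulLeft_apply, mem_homogeneousSubmodule]
  rw [_root_.funext_iff]
  simp [Matrix.mulVec, dotProduct]

theorem tangencyMatrix_mulVec_eq_zero_iff_exists_eq_smul [CharZero K] (n : ℕ)
    {f : Fin 4 → MvPolynomial (Fin 2) K} :
    (tangencyMatrix K (n + 2)).mulVec f = 0 ↔
      ∃ c : MvPolynomial (Fin 2) K, f = c • tangencyKernelVector (X 0) (X 1) (n + 1) := by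
  rw [tangencyMatrix_mulVec_eq_zero_iff]
  exact tangencyRelations_iff_exists_eq_smul X_prime (X_dvd_X.not.mpr zero_ne_one)

theorem tangencySolSpace_eq_map [CharZero K] (n m : ℕ) :
    tangencySolSpace K (n + 2) (m + (n + 3)) = (homogeneousSubmodule (Fin 2) K m).map
      ((LinearMap.toSpanSingleton _ _
        (tangencyKernelVector (X 0) (X 1) (n + 1))).restrictScalars K) := by
  ext f
  simp only [mem_tangencySolSpace, tangencyMatrix_mulVec_eq_zero_iff_exists_eq_smul,
    Submodule.mem_map, mem_homogeneousSubmodule, LinearMap.coe_restrictScalars,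
    LinearMap.toSpanSingleton_apply]
  constructor
  · rintro ⟨hhom, c, rfl⟩
    exact ⟨c, (hhom 0).of_mul_X_pow, rfl⟩
  · rintro ⟨c, hc, rfl⟩
    exact ⟨fun i ↦ hc.mul (tangencyKernelVector_isHomogeneous (isHomogeneous_X K 0)
      (isHomogeneous_X K 1) _ i), c, rfl⟩

end Tangency

theorem stmt_14_general {K : Type*} [Field K] [CharZero K] (d e : ℕ) (hd : 2 ≤ d)
    (he : d + 1 ≤ e)
    (f : Fin 4 → MvPolynomial (Fin 2) K)
    (hAf : (tangencyMatrix K d).mulVec f = 0) :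
    X 0 ^ (d + 1) ∣ f 0 ∧
      (∀ g : Fin 4 → MvPolynomial (Fin 2) K, (∀ i, (g i).IsHomogeneous e) →
        (tangencyMatrix K d).mulVec g = 0 → g 0 = f 0 → g = f) ∧
      Module.finrank K (tangencySolSpace K d e) = e - d := by
  obtain ⟨n, rfl⟩ : ∃ n, d = n + 2 := ⟨d - 2, by omega⟩
  obtain ⟨m, rfl⟩ : ∃ m, e = m + (n + 3) := ⟨e - (n + 3), by omega⟩
  have hinj := smul_tangencyKernelVector_injective (X_ne_zero (R := K) (0 : Fin 2)) (X 1) (n + 1)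
  obtain ⟨c, rfl⟩ := (tangencyMatrix_mulVec_eq_zero_iff_exists_eq_smul n).1 hAf
  refine ⟨Dvd.intro_left c rfl, fun g _ hAg hg0 ↦ ?_, ?_⟩
  · obtain ⟨c', rfl⟩ := (tangencyMatrix_mulVec_eq_zero_iff_exists_eq_smul n).1 hAg
    rw [hinj.eq_iff]
    exact mul_right_cancel₀ (pow_ne_zero _ (X_ne_zero 0)) hg0
  · rw [tangencySolSpace_eq_map, ← (Submodule.equivMapOfInjective _ hinj _).finrank_eq,
      finrank_homogeneousSubmodule_fin_two]
    omega

/-- Fiber computation in the proof of Theorem 5.1 (higherDegreeRelations): if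
`A (f₀,f₁,f₂,f₃)ᵀ = 0` with the `fᵢ` homogeneous of degree `e`, then `s^{d+1} ∣ f₀`,
`f₀` determines `f₁, f₂, f₃` uniquely, and the solution space has dimension `e - d`. -/
theorem stmt_14 {K : Type*} [Field K] [CharZero K] (d e : ℕ) (hd : 2 ≤ d)
    (he : d + 1 ≤ e)
    (f : Fin 4 → MvPolynomial (Fin 2) K)
    (hf : ∀ i, (f i).IsHomogeneous e)
    (hAf : (tangencyMatrix K d).mulVec f = 0) :
    X 0 ^ (d + 1) ∣ f 0 ∧
      (∀ g : Fin 4 → MvPolynomial (Fin 2) K, (∀ i, (g i).IsHomogeneous e) →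
        (tangencyMatrix K d).mulVec g = 0 → g 0 = f 0 → g = f) ∧
      Module.finrank K (tangencySolSpace K d e) = e - d :=
  stmt_14_general d e hd he f hAf
end

section
/- Let $g_1, g_2, g_3$ be homogeneous quadratics in $s,t$ over a field of characteristic zero such that the three vectors of coefficients are linearly independent (i.e., $(g_1,g_2,g_3)$ defines a smooth plane conic). Then the $2\times 3$ matrix with rows $(\partial_s g_1, \partial_s g_2, \partial_s g_3)$ and $(\partial_t g_1, \partial_t g_2, \partial_t g_3)$ has rank 2 at every point $(s,t) \ne (0,0)$; equivalently, the three $2\times 2$ minors $\det M_{1,2}, \det M_{1,3}, \det M_{2,3}$ have no common zero on $\mathbb{P}^1$. -/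
open MvPolynomial
open scoped Matrix

/-! The Jacobian of `(g₁, g₂, g₃)` at `(s, t)` factors as `J(s, t) * Vᵀ`, where `V` is the
invertible matrix of coefficients and `J(s, t)` is the Jacobian of the monomials
`(s², st, t²)`; the rows `(2s, t, 0)` and `(0, s, 2t)` of `J(s, t)` are independent as soon as
`2 ≠ 0` and `(s, t) ≠ (0, 0)`. -/

noncomputable def binaryQuadratic {R : Type*} [CommRing R] (a : Fin 3 → R) :
    MvPolynomial (Fin 2) R :=
  C (a 0) * X 0 ^ 2 + C (a 1) * X 0 * X 1 + C (a 2) * X 1 ^ 2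

def monomialJacobian {R : Type*} [CommRing R] (s t : R) : Matrix (Fin 2) (Fin 3) R :=
  !![2 * s, t, 0; 0, s, 2 * t]

theorem eval_pderiv_binaryQuadratic {R : Type*} [CommRing R] (a : Fin 3 → R) (s t : R)
    (l : Fin 2) : eval ![s, t] (pderiv l (binaryQuadratic a)) = (monomialJacobian s t *ᵥ a) l := by
  fin_cases l <;>
  simp [binaryQuadratic, monomialJacobian, Matrix.mulVec, dotProduct, Fin.sum_univ_three] <;> ring

theorem rank_monomialJacobian {K : Type*} [Field K] (h2 : (2 : K) ≠ 0) {s t : K}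
    (hst : (s, t) ≠ (0, 0)) : (monomialJacobian s t).rank = 2 := by
  refine LinearIndependent.rank_matrix (LinearIndependent.pair_iff.2 fun c d hcd => ?_)
  have h0 : c * (2 * s) = 0 := by simpa [monomialJacobian] using congrFun hcd 0
  have h1 : c * t + d * s = 0 := by simpa [monomialJacobian] using congrFun hcd 1
  have hd : d * (2 * t) = 0 := by simpa [monomialJacobian] using congrFun hcd 2
  by_cases hs : s = 0
  · have ht : t ≠ 0 := fun ht => hst (by simp [hs, ht])
    simp_all
  · simp_all

/-- Unramifiedness of a smooth conic parameterization (used in Lemma 4.8): if the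
coefficient vectors of the quadratics `g₁, g₂, g₃` are linearly independent, the
`2×3` matrix of partial derivatives has rank 2 at every `(s,t) ≠ (0,0)`. -/
theorem stmt_18 {K : Type*} [Field K] [CharZero K]
    (v : Fin 3 → Fin 3 → K) (hv : LinearIndependent K v)
    (g : Fin 3 → MvPolynomial (Fin 2) K)
    (hg : ∀ i, g i = C (v i 0) * X 0 ^ 2 + C (v i 1) * X 0 * X 1 + C (v i 2) * X 1 ^ 2) :
    ∀ s t : K, (s, t) ≠ (0, 0) →
      (Matrix.of fun (l : Fin 2) (j : Fin 3) => eval ![s, t] (pderiv l (g j))).rank = 2 := by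
  intro s t hst
  have hfactor : (Matrix.of fun (l : Fin 2) (j : Fin 3) => eval ![s, t] (pderiv l (g j))) =
      monomialJacobian s t * (Matrix.of v)ᵀ := by
    ext l j
    rw [Matrix.of_apply, hg j, ← binaryQuadratic, eval_pderiv_binaryQuadratic]
    rfl
  have hV : IsUnit (Matrix.of v)ᵀ.det := by
    rw [Matrix.det_transpose, ← Matrix.isUnit_iff_isUnit_det]
    exact Matrix.linearIndependent_rows_iff_isUnit.1 hv
  rw [hfactor, Matrix.rank_mul_eq_left_of_isUnit_det _ _ hV]
  exact rank_monomialJacobian two_ne_zero hst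
end

section
/- Write $2e - 2 - 2k = q(n-k-1) + r$ with $0 \le r < n-k-1$, where $n - k$ is odd, $2e \ge 3(n-1)$, and $3k \le n+1$. Define the sequence $c_1, \dots, c_n$ = $(1,1,x_1,1,1,x_2,\dots,1,1,x_k,1,x_{k+1},\dots,x_{(n-k-1)/2},1)$ where $x_1 = \cdots = x_{r/2} = q$ and the remaining $x_i = q-1$. Set $k_0 = e$ and $k_i = k_{i-1} - c_i$. Then $k_{n-1} = 1$, $k_n = 0$, the $k_i$ are strictly decreasing, and among the sums $b_i = c_i + c_{i+1}$ ($1 \le i \le n-1$), exactly $k$ equal $2$, exactly $r$ equal $q+1$, and the remaining $n-1-k-r$ equal $q$. -/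
/-!
Write `n = k + 2m + 1` and `r = 2s`. The entries `x₁, …, x_m` sit in `c` at the indices
`2l + min l k`, which are interior and pairwise non-adjacent, and `c` is `1` everywhere else
on `[1, n]`. So every `x_l` produces exactly two consecutive sums, both `x_l + 1`, and the
remaining `(n - 1) - 2m = k` sums are `1 + 1`. Likewise `∑ cᵢ = (n - m) + ∑ x_l = e`, which gives
`κ n = 0` and `κ (n - 1) = c n = 1`; and `κ` decreases strictly because `q ≥ 2`, forced by
`2e ≥ 3(n - 1)`, makes every `cᵢ` positive.
-/

open Finset

theorem map_Ioc_ite_le {α : Type*} {s m : ℕ} (hsm : s ≤ m) (a b : α) :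
    (Ioc 0 m).val.map (fun l => if l ≤ s then a else b) =
      Multiset.replicate s a + Multiset.replicate (m - s) b := by
  have hdisj : Disjoint (Ioc 0 s) (Ioc s m) := Finset.Ioc_disjoint_Ioc_of_le le_rfl
  rw [← Finset.Ioc_union_Ioc_eq_Ioc (Nat.zero_le s) hsm, ← Finset.disjUnion_eq_union _ _ hdisj,
    Finset.disjUnion_val, Multiset.map_add]
  congr 1
  · rw [Multiset.map_congr rfl fun l hl => if_pos (Finset.mem_Ioc.mp hl).2, Multiset.map_const',
      Finset.card_val, Nat.card_Ioc, Nat.sub_zero]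
  · rw [Multiset.map_congr rfl fun l hl => if_neg (Finset.mem_Ioc.mp hl).1.not_ge,
      Multiset.map_const', Finset.card_val, Nat.card_Ioc]

theorem sum_Icc_of_eq_one_off {n : ℕ} {P : Finset ℕ} {c : ℕ → ℕ} (hP : P ⊆ Icc 1 n)
    (hc : ∀ i ∈ Icc 1 n, i ∉ P → c i = 1) :
    ∑ i ∈ Icc 1 n, c i = (n - #P) + ∑ p ∈ P, c p := by
  rw [← Finset.sum_sdiff hP, Finset.sum_congr rfl fun i hi => hc i (Finset.mem_sdiff.mp hi).1
    (Finset.mem_sdiff.mp hi).2, Finset.sum_const, smul_eq_mul, mul_one,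
    Finset.card_sdiff_of_subset hP, Nat.card_Icc, Nat.add_sub_cancel]

section Isolated

variable {n : ℕ} {P : Finset ℕ}

theorem Icc_val_eq_add_of_isolated (hP : P ⊆ Icc 2 n) (hsep : ∀ p ∈ P, p + 1 ∉ P) :
    (Icc 1 n).val = P.val + P.val.map (· - 1) +
      ((Icc 1 n).val.filter (· ∉ P)).filter (· + 1 ∉ P) := by
  have hPmem : ∀ p ∈ P, 2 ≤ p ∧ p ≤ n := fun p hp => Finset.mem_Icc.mp (hP hp)
  have hbefore : ((Icc 1 n).val.filter (· ∉ P)).filter (· + 1 ∈ P) = P.val.map (· - 1) := by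
    rw [Multiset.filter_filter, ← Finset.filter_val, ← Finset.image_val_of_injOn]
    · congr 1
      ext i
      simp only [Finset.mem_filter, Finset.mem_Icc, Finset.mem_image]
      constructor
      · rintro ⟨-, hi, -⟩
        exact ⟨i + 1, hi, rfl⟩
      · rintro ⟨p, hp, rfl⟩
        have := hPmem p hp
        have hp1 : p - 1 + 1 = p := by omega
        exact ⟨by omega, by rwa [hp1], fun h => hsep _ h (by rwa [hp1])⟩
    · intro p hp p' hp' h
      have := hPmem p hp
      have := hPmem p' hp'
      simp only at h
      omega
  have hat : (Icc 1 n).val.filter (· ∈ P) = P.val := by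
    rw [← Finset.filter_val, Finset.filter_mem_eq_inter, Finset.inter_eq_right.mpr
      (hP.trans (Finset.Icc_subset_Icc_left (by norm_num)))]
  rw [← hbefore, add_assoc, Multiset.filter_add_not, ← hat, Multiset.filter_add_not]

theorem map_add_succ_of_isolated {c : ℕ → ℕ} (hP : P ⊆ Icc 2 n) (hsep : ∀ p ∈ P, p + 1 ∉ P)
    (hc : ∀ i ∈ Icc 1 (n + 1), i ∉ P → c i = 1) :
    (Icc 1 n).val.map (fun i => c i + c (i + 1)) =
      Multiset.replicate (n - 2 * #P) 2 + 2 • P.val.map (fun p => c p + 1) := by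
  set f := fun i => c i + c (i + 1)
  have hPmem : ∀ p ∈ P, 2 ≤ p ∧ p ≤ n := fun p hp => Finset.mem_Icc.mp (hP hp)
  have hsplit := Icc_val_eq_add_of_isolated hP hsep
  set C := ((Icc 1 n).val.filter (· ∉ P)).filter (· + 1 ∉ P)
  have hfP : P.val.map f = P.val.map (fun p => c p + 1) := by
    refine Multiset.map_congr rfl fun p hp => ?_
    have := hPmem p hp
    simp only [f, hc (p + 1) (by simp; omega) (hsep p hp)]
  have hfP' : (P.val.map (· - 1)).map f = P.val.map (fun p => c p + 1) := by
    rw [Multiset.map_map]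
    refine Multiset.map_congr rfl fun p hp => ?_
    have := hPmem p hp
    have hp1 : p - 1 + 1 = p := by omega
    simp only [Function.comp, f, hp1]
    rw [hc (p - 1) (by simp; omega) fun h => hsep _ h (by rwa [hp1]), add_comm]
  have hCcard : Multiset.card C = n - 2 * #P := by
    have := congrArg Multiset.card hsplit
    simp only [Multiset.card_add, Multiset.card_map, Finset.card_val, Nat.card_Icc] at this
    omega
  have hfC : C.map f = Multiset.replicate (n - 2 * #P) 2 := by
    rw [Multiset.eq_replicate, Multiset.card_map, hCcard]
    refine ⟨rfl, fun b hb => ?_⟩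
    obtain ⟨i, hi, rfl⟩ := Multiset.mem_map.mp hb
    simp only [C, Multiset.mem_filter, Finset.mem_val, Finset.mem_Icc] at hi
    simp only [f, hc i (by simp; omega) hi.1.2, hc (i + 1) (by simp; omega) hi.2]
  rw [hsplit, Multiset.map_add, Multiset.map_add, hfP, hfP', hfC, two_nsmul]
  abel

end Isolated

/-- The sequence `c` of the statement, indexed from `1`. -/
def exponentGaps (k : ℕ) (x : ℕ → ℕ) (i : ℕ) : ℕ :=
  if i ≤ 3 * k then (if i % 3 = 0 then x (i / 3) else 1)
  else (if (i - 3 * k) % 2 = 1 then 1 else x (k + (i - 3 * k) / 2))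

/-- The index of `x l` in `exponentGaps k x`. -/
def xPos (k l : ℕ) : ℕ := 2 * l + min l k

theorem exponentGaps_xPos (k : ℕ) (x : ℕ → ℕ) (l : ℕ) : exponentGaps k x (xPos k l) = x l := by
  unfold exponentGaps xPos
  split_ifs <;> congr 1 <;> omega

theorem xPos_strictMono (k : ℕ) : StrictMono (xPos k) := by
  intro a b h
  unfold xPos
  omega

theorem xPos_add_one_ne (k l l' : ℕ) : xPos k l + 1 ≠ xPos k l' := by
  unfold xPos
  omega

theorem image_xPos_subset {k m : ℕ} : (Ioc 0 m).image (xPos k) ⊆ Icc 2 (k + 2 * m) := by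
  intro p hp
  simp only [Finset.mem_image, Finset.mem_Ioc, xPos] at hp
  obtain ⟨l, hl, rfl⟩ := hp
  simp only [Finset.mem_Icc]
  omega

theorem exponentGaps_eq_one {k m i : ℕ} (x : ℕ → ℕ) (hkm : k ≤ m + 1)
    (hi : i ∈ Icc 1 (k + 2 * m + 1)) (hne : i ∉ (Ioc 0 m).image (xPos k)) :
    exponentGaps k x i = 1 := by
  simp only [Finset.mem_image, Finset.mem_Ioc, not_exists, not_and, Finset.mem_Icc, xPos] at hne hi
  unfold exponentGaps
  split_ifs
  · exact (hne (i / 3) ⟨by omega, by omega⟩ (by omega)).elim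
  · rfl
  · rfl
  · exact (hne (k + (i - 3 * k) / 2) ⟨by omega, by omega⟩ (by omega)).elim

theorem exponentGaps_last {k m : ℕ} (x : ℕ → ℕ) (hkm : k ≤ m + 1) :
    exponentGaps k x (k + 2 * m + 1) = 1 :=
  exponentGaps_eq_one x hkm (by simp) fun h => by simpa using image_xPos_subset h

theorem one_le_exponentGaps {x : ℕ → ℕ} (hx : ∀ l, 1 ≤ x l) (k i : ℕ) :
    1 ≤ exponentGaps k x i := by
  unfold exponentGaps
  split_ifs
  exacts [hx _, le_rfl, le_rfl, hx _]

theorem map_exponentGaps_add_succ {k m : ℕ} (x : ℕ → ℕ) (hkm : k ≤ m + 1) :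
    (Icc 1 (k + 2 * m)).val.map (fun i => exponentGaps k x i + exponentGaps k x (i + 1)) =
      Multiset.replicate k 2 + 2 • (Ioc 0 m).val.map (fun l => x l + 1) := by
  have hsep : ∀ p ∈ (Ioc 0 m).image (xPos k), p + 1 ∉ (Ioc 0 m).image (xPos k) := by
    simp only [Finset.mem_image]
    rintro _ ⟨l, -, rfl⟩ ⟨l', -, h⟩
    exact xPos_add_one_ne k l l' h.symm
  rw [map_add_succ_of_isolated image_xPos_subset hsep fun i hi => exponentGaps_eq_one x hkm hi,
    Finset.card_image_of_injective _ (xPos_strictMono k).injective, Nat.card_Ioc,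
    Finset.image_val_of_injOn (xPos_strictMono k).injective.injOn, Multiset.map_map]
  simp only [Function.comp_def, exponentGaps_xPos]
  congr 2
  omega

theorem sum_exponentGaps {k m : ℕ} (x : ℕ → ℕ) (hkm : k ≤ m + 1) :
    ∑ i ∈ Icc 1 (k + 2 * m + 1), exponentGaps k x i = (k + m + 1) + ∑ l ∈ Ioc 0 m, x l := by
  rw [sum_Icc_of_eq_one_off (image_xPos_subset.trans (Finset.Icc_subset_Icc (by norm_num)
      (by omega))) fun i hi => exponentGaps_eq_one x hkm hi,
    Finset.card_image_of_injective _ (xPos_strictMono k).injective, Nat.card_Ioc,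
    Finset.sum_image fun a _ b _ h => (xPos_strictMono k).injective h]
  simp only [exponentGaps_xPos]
  congr 1
  omega

section TwoValued

variable {k m s q : ℕ} (hkm : k ≤ m + 1) (hsm : s ≤ m) (hq : 1 ≤ q)
include hkm hsm hq

theorem sum_exponentGaps_ite :
    ∑ i ∈ Icc 1 (k + 2 * m + 1), exponentGaps k (fun l => if l ≤ s then q else q - 1) i =
      k + 1 + q * m + s := by
  rw [sum_exponentGaps _ hkm, Finset.sum_eq_multiset_sum, map_Ioc_ite_le hsm]
  simp only [Multiset.sum_add, Multiset.sum_replicate, smul_eq_mul]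
  zify [hsm, hq]
  ring

theorem map_exponentGaps_ite_add_succ :
    (Icc 1 (k + 2 * m)).val.map (fun i =>
        exponentGaps k (fun l => if l ≤ s then q else q - 1) i +
          exponentGaps k (fun l => if l ≤ s then q else q - 1) (i + 1)) =
      Multiset.replicate k 2 + Multiset.replicate (2 * s) (q + 1) +
        Multiset.replicate (2 * (m - s)) q := by
  have hsucc : (fun l => (if l ≤ s then q else q - 1) + 1) = fun l => if l ≤ s then q + 1 else q :=
    funext fun l => by split_ifs <;> omega
  rw [map_exponentGaps_add_succ _ hkm, hsucc, map_Ioc_ite_le hsm, smul_add,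
    Multiset.nsmul_replicate, Multiset.nsmul_replicate, add_assoc]

end TwoValued

theorem sub_sum_Icc_succ {e : ℤ} {c : ℕ → ℕ} {κ : ℕ → ℤ}
    (hκ : ∀ i, κ i = e - ∑ j ∈ Icc 1 i, (c j : ℤ)) (i : ℕ) : κ (i + 1) = κ i - c (i + 1) := by
  rw [hκ, hκ, Finset.sum_Icc_succ_top (by omega)]
  ring

theorem stmt_19_general (n e k q r : ℕ) (h3k : 3 * k ≤ n + 1)
    (h2e : 3 * (n - 1) ≤ 2 * e) (hodd : (n - k) % 2 = 1)
    (hr : r < n - k - 1) (hdiv : 2 * e = q * (n - k - 1) + r + 2 + 2 * k)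
    (x : ℕ → ℕ) (hx : ∀ l, x l = if l ≤ r / 2 then q else q - 1)
    (c : ℕ → ℕ)
    (hc : ∀ i, c i = if i ≤ 3 * k then (if i % 3 = 0 then x (i / 3) else 1)
      else (if (i - 3 * k) % 2 = 1 then 1 else x (k + (i - 3 * k) / 2)))
    (κ : ℕ → ℤ) (hκ : ∀ i, κ i = (e : ℤ) - ∑ j ∈ Finset.Icc 1 i, (c j : ℤ)) :
    κ (n - 1) = 1 ∧ κ n = 0 ∧ (∀ i < n, κ (i + 1) < κ i) ∧
      Multiset.map (fun i => c i + c (i + 1)) (Finset.Icc 1 (n - 1)).val =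
        Multiset.replicate k 2 + Multiset.replicate r (q + 1) +
          Multiset.replicate (n - 1 - k - r) q := by
  obtain ⟨m, rfl⟩ : ∃ m, n = k + 2 * m + 1 := ⟨(n - k) / 2, by omega⟩
  have h2m : k + 2 * m + 1 - k - 1 = 2 * m := by omega
  rw [h2m, show q * (2 * m) = 2 * (q * m) by ring] at hdiv
  rw [h2m] at hr
  rw [Nat.add_sub_cancel] at h2e ⊢
  obtain ⟨s, rfl⟩ : ∃ s, r = 2 * s := ⟨r / 2, by omega⟩
  have hq : 2 ≤ q := by
    by_contra! hlt
    have : q * m ≤ 1 * m := Nat.mul_le_mul_right m (by omega)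
    omega
  obtain rfl : c = exponentGaps k x := funext hc
  have hxq : x = fun l => if l ≤ s then q else q - 1 := funext fun l => by simpa using hx l
  have hkm : k ≤ m + 1 := by omega
  have hκn : κ (k + 2 * m + 1) = 0 := by
    rw [hκ, ← Nat.cast_sum, hxq, sum_exponentGaps_ite hkm (by omega) (by omega)]
    omega
  have hlast : (exponentGaps k x (k + 2 * m + 1) : ℤ) = 1 := by
    exact_mod_cast exponentGaps_last x hkm
  refine ⟨by linarith [sub_sum_Icc_succ hκ (k + 2 * m)], hκn, fun i _ => ?_, ?_⟩
  · have hx1 : ∀ l, 1 ≤ x l := fun l => by rw [hx]; split_ifs <;> omega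
    have := one_le_exponentGaps hx1 k (i + 1)
    rw [sub_sum_Icc_succ hκ]
    omega
  · rw [hxq, map_exponentGaps_ite_add_succ hkm (by omega) (by omega),
      show k + 2 * m - k - 2 * s = 2 * (m - s) by omega]

/-- Combinatorial verification underlying the monomial-curve construction in the
proof of Proposition 4.4 (goodComp), case `n - k` odd: the exponent sequence `κ`
is strictly decreasing with `κ (n-1) = 1`, `κ n = 0`, and among the consecutive
sums `bᵢ = cᵢ + cᵢ₊₁` exactly `k` equal `2`, exactly `r` equal `q+1`, and the
remaining `n-1-k-r` equal `q`. -/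
theorem stmt_19 (n e k q r : ℕ) (hk : 1 ≤ k) (h3k : 3 * k ≤ n + 1)
    (h2e : 3 * (n - 1) ≤ 2 * e) (hkn : k ≤ n) (hodd : (n - k) % 2 = 1)
    (hr : r < n - k - 1) (hdiv : 2 * e = q * (n - k - 1) + r + 2 + 2 * k)
    (x : ℕ → ℕ) (hx : ∀ l, x l = if l ≤ r / 2 then q else q - 1)
    (c : ℕ → ℕ)
    (hc : ∀ i, c i = if i ≤ 3 * k then (if i % 3 = 0 then x (i / 3) else 1)
      else (if (i - 3 * k) % 2 = 1 then 1 else x (k + (i - 3 * k) / 2)))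
    (κ : ℕ → ℤ) (hκ : ∀ i, κ i = (e : ℤ) - ∑ j ∈ Finset.Icc 1 i, (c j : ℤ)) :
    κ (n - 1) = 1 ∧ κ n = 0 ∧ (∀ i < n, κ (i + 1) < κ i) ∧
      Multiset.map (fun i => c i + c (i + 1)) (Finset.Icc 1 (n - 1)).val =
        Multiset.replicate k 2 + Multiset.replicate r (q + 1) +
          Multiset.replicate (n - 1 - k - r) q :=
  stmt_19_general n e k q r h3k h2e hodd hr hdiv x hx c hc κ hκ
end
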